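/- arXiv:0709.2097 — 4 statements merged into one kernel-verified Lean document; each statement's English description precedes it below -/
import Mathlib

section
/- For any natural number $a$ and any odd natural number $b$, $\sum_{j=0}^{b} (-1)^j \binom{a}{j}\binom{a+1}{b-j} = (-1)^{(b-1)/2}\binom{a}{(b-1)/2}$. -/
/-!
The sum is the coefficient of `X ^ b` in `(1 - X) ^ a * (1 + X) ^ (a + 1)`, which equals
`(1 + X) * (1 - X ^ 2) ^ a`. As `(1 - X ^ 2) ^ a` has no odd coefficients, for `b = 2 * m + 1`
this is the coefficient of `X ^ (2 * m)` in `(1 - X ^ 2) ^ a`, namely `(-1) ^ m * a.choose m`.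
-/

open Polynomial Finset

theorem Polynomial.coeff_one_sub_X_pow {R : Type*} [CommRing R] (n k : ℕ) :
    ((1 - X : R[X]) ^ n).coeff k = (-1) ^ k * n.choose k := by
  have hC (j : ℕ) : (-X : R[X]) ^ j = C ((-1) ^ j) * X ^ j := by
    rw [neg_pow, map_pow, map_neg, map_one]
  rw [sub_eq_add_neg, add_comm, add_pow, finsetSum_coeff]
  simp_rw [hC, one_pow, mul_one, ← C_eq_natCast, mul_comm _ (C _), ← mul_assoc, ← C_mul,
    coeff_C_mul_X_pow, sum_ite_eq, mem_range_succ_iff]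
  split_ifs with hk
  · exact mul_comm _ _
  · rw [Nat.choose_eq_zero_of_lt (not_le.mp hk), Nat.cast_zero, mul_zero]

theorem Polynomial.one_sub_X_pow_mul_one_add_X_pow_succ {R : Type*} [CommRing R] (n : ℕ) :
    (1 - X : R[X]) ^ n * (1 + X) ^ (n + 1) = (1 + X) * expand R 2 ((1 - X) ^ n) := by
  rw [map_pow, map_sub, map_one, expand_X, show (1 - X ^ 2 : R[X]) = (1 - X) * (1 + X) by ring,
    mul_pow]
  ring

theorem sum_range_neg_one_pow_mul_choose_mul_choose_succ {R : Type*} [CommRing R] (n m : ℕ) :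
    ∑ j ∈ range (2 * m + 1 + 1), (-1 : R) ^ j * n.choose j * (n + 1).choose (2 * m + 1 - j) =
      (-1) ^ m * n.choose m := by
  calc ∑ j ∈ range (2 * m + 1 + 1), (-1 : R) ^ j * n.choose j * (n + 1).choose (2 * m + 1 - j)
      = ((1 - X : R[X]) ^ n * (1 + X) ^ (n + 1)).coeff (2 * m + 1) := by
        simp_rw [coeff_mul, Nat.sum_antidiagonal_eq_sum_range_succ_mk, coeff_one_sub_X_pow,
          coeff_one_add_X_pow]
    _ = ((1 + X) * expand R 2 ((1 - X) ^ n)).coeff (2 * m + 1) := by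
        rw [one_sub_X_pow_mul_one_add_X_pow_succ]
    _ = (expand R 2 ((1 - X) ^ n)).coeff (2 * m + 1) +
          (expand R 2 ((1 - X) ^ n)).coeff (2 * m) := by
        rw [add_mul, one_mul, coeff_add, coeff_X_mul]
    _ = (-1) ^ m * n.choose m := by
        rw [coeff_expand two_pos, coeff_expand two_pos, if_neg (by omega),
          if_pos (dvd_mul_right 2 m), Nat.mul_div_cancel_left m two_pos, coeff_one_sub_X_pow,
          zero_add]

theorem binomial_alternating_sum (a b : ℕ) (hb : Odd b) :
    ∑ j ∈ Finset.range (b + 1),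
        (-1 : ℤ) ^ j * (a.choose j) * ((a + 1).choose (b - j)) =
      (-1 : ℤ) ^ ((b - 1) / 2) * (a.choose ((b - 1) / 2)) := by
  obtain ⟨m, rfl⟩ := hb
  rw [show (2 * m + 1 - 1) / 2 = m by omega]
  exact sum_range_neg_one_pow_mul_choose_mul_choose_succ a m
end

section
/- Let $m$ be an odd integer with $m \ge 3$ and let $k$ be a nonnegative integer with $2k+1 \le m-2$. Then $\sum_{j=0}^{2k+1} (-1)^{j+k} \binom{2k+1}{j}\binom{m-2k-3}{\frac{m-3}{2}-j}\binom{m-2}{2k+1} = \binom{\frac{m-3}{2}}{k}\binom{m-2}{\frac{m-1}{2}}$. -/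
/-!
Put `m = 2n + 3`, `N = 2n + 1` and `a = 2k + 1`. The sum is `(-1)^k C(N, a)` times the coefficient
of `X^n` in `(1 - X)^a (1 + X)^(N - a)`, a Krawtchouk number. Krawtchouk reciprocity
`C(N, a) [X^n] (1 - X)^a (1 + X)^(N - a) = C(N, n) [X^a] (1 - X)^n (1 + X)^(N - n)` holds termwise,
since `C(N, a) C(a, j) C(N - a, n - j)` is the multinomial coefficient of
`(j, a - j, n - j, N - a - n + j)`. After the swap the polynomial is
`(1 - X)^n (1 + X)^(n + 1) = (1 - X²)^n (1 + X)`, whose coefficient of `X^(2k+1)` is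
`(-1)^k C(n, k)`.
-/

open Polynomial Finset

theorem Nat.choose_mul_choose_sub_comm (M p q : ℕ) :
    M.choose p * (M - p).choose q = M.choose q * (M - q).choose p := by
  have hp := Nat.choose_mul (n := M) (k := p + q) (s := p) (Nat.le_add_right p q)
  have hq := Nat.choose_mul (n := M) (k := p + q) (s := q) (Nat.le_add_left q p)
  rw [Nat.add_sub_cancel_left] at hp
  rw [Nat.add_sub_cancel] at hq
  rw [← hp, ← hq, Nat.choose_symm_add]

theorem Nat.choose_mul_choose_mul_choose_sub_comm {N a n j : ℕ} (ha : j ≤ a) (hn : j ≤ n) :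
    N.choose a * a.choose j * (N - a).choose (n - j) =
      N.choose n * n.choose j * (N - n).choose (a - j) := by
  have hNa : N - a = N - j - (a - j) := by omega
  have hNn : N - n = N - j - (n - j) := by omega
  rw [Nat.choose_mul ha, Nat.choose_mul hn, mul_assoc, mul_assoc, hNa, hNn,
    Nat.choose_mul_choose_sub_comm]

namespace Polynomial

variable {R : Type*} [CommRing R]

theorem coeff_one_sub_X_pow_s1 (a j : ℕ) : ((1 - X : R[X]) ^ a).coeff j = (-1) ^ j * a.choose j := by
  have h : (1 - X : R[X]) = C (-1) * (X + C (-1)) := by simp only [map_neg, map_one]; ring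
  rw [h, mul_pow, ← C_pow, coeff_C_mul, coeff_X_add_C_pow, ← mul_assoc, ← pow_add]
  rcases le_or_gt j a with hj | hj
  · rw [show a + (a - j) = j + 2 * (a - j) by omega, pow_add, pow_mul, neg_one_sq, one_pow,
      mul_one]
  · simp [Nat.choose_eq_zero_of_lt hj]

theorem coeff_one_sub_X_pow_mul_one_add_X_pow (a b n : ℕ) {r : ℕ} (hr : min a n < r) :
    ((1 - X) ^ a * (1 + X) ^ b : R[X]).coeff n =
      ∑ j ∈ range r, (-1) ^ j * a.choose j *
        (if j ≤ n then (b.choose (n - j) : R) else 0) := by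
  set f : ℕ → R := fun j ↦
    (-1) ^ j * a.choose j * (if j ≤ n then (b.choose (n - j) : R) else 0)
  have hf : ∀ j ≥ min a n + 1, f j = 0 := by
    intro j hj
    rcases lt_or_ge a j with hja | hjn
    · simp [f, Nat.choose_eq_zero_of_lt hja]
    · simp [f, show ¬j ≤ n by omega]
  rw [eventually_constant_sum hf hr, coeff_mul, Nat.sum_antidiagonal_eq_sum_range_succ_mk,
    ← eventually_constant_sum hf (by omega : min a n + 1 ≤ n.succ)]
  refine sum_congr rfl fun j hj ↦ ?_
  rw [coeff_one_sub_X_pow_s1, coeff_one_add_X_pow]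
  simp only [f, if_pos (Nat.lt_succ_iff.mp (mem_range.mp hj))]

theorem choose_mul_coeff_one_sub_X_pow_mul_one_add_X_pow_comm (N a n : ℕ) :
    (N.choose a : R) * ((1 - X) ^ a * (1 + X) ^ (N - a) : R[X]).coeff n =
      N.choose n * ((1 - X) ^ n * (1 + X) ^ (N - n) : R[X]).coeff a := by
  rw [coeff_one_sub_X_pow_mul_one_add_X_pow a _ n (r := a + n + 1) (by omega),
    coeff_one_sub_X_pow_mul_one_add_X_pow n _ a (r := a + n + 1) (by omega), mul_sum, mul_sum]
  refine sum_congr rfl fun j _ ↦ ?_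
  by_cases hja : j ≤ a <;> by_cases hjn : j ≤ n
  · have h := congrArg (Nat.cast (R := R)) (Nat.choose_mul_choose_mul_choose_sub_comm
      (N := N) hja hjn)
    push_cast at h
    rw [if_pos hja, if_pos hjn]
    linear_combination (-1 : R) ^ j * h
  · simp [hjn, Nat.choose_eq_zero_of_lt (not_le.mp hjn)]
  · simp [hja, Nat.choose_eq_zero_of_lt (not_le.mp hja)]
  · simp [hja, hjn]

theorem coeff_one_sub_X_pow_mul_one_add_X_pow_succ_odd (n k : ℕ) :
    ((1 - X) ^ n * (1 + X) ^ (n + 1) : R[X]).coeff (2 * k + 1) = (-1) ^ k * n.choose k := by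
  have h : ((1 - X) ^ n * (1 + X) ^ (n + 1) : R[X]) = expand R 2 ((1 - X) ^ n) * (1 + X) := by
    have h₂ : (1 - X ^ 2 : R[X]) = (1 - X) * (1 + X) := by ring
    rw [map_pow, map_sub, map_one, expand_X, h₂, mul_pow, pow_succ]
    ring
  rw [h, mul_add, mul_one, coeff_add, coeff_mul_X, coeff_expand two_pos, coeff_expand two_pos,
    if_neg (by omega), if_pos (dvd_mul_right 2 k), Nat.mul_div_cancel_left k two_pos,
    coeff_one_sub_X_pow_s1, zero_add]

end Polynomial

theorem equilateral_binomial_identity_general (m k : ℕ) (hm3 : 3 ≤ m) (hmodd : Odd m) :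
    ∑ j ∈ Finset.range (2 * k + 2),
        (-1 : ℤ) ^ (j + k) * ((2 * k + 1).choose j) *
          (if j ≤ (m - 3) / 2 then ((m - 2 * k - 3).choose ((m - 3) / 2 - j) : ℤ) else 0) *
          ((m - 2).choose (2 * k + 1)) =
      ((m - 3) / 2).choose k * ((m - 2).choose ((m - 1) / 2)) := by
  obtain ⟨n, rfl⟩ : ∃ n, m = 2 * n + 3 := by
    obtain ⟨t, rfl⟩ := hmodd
    exact ⟨t - 1, by omega⟩
  rw [show 2 * n + 3 - 2 = 2 * n + 1 by omega, show (2 * n + 3 - 3) / 2 = n by omega,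
    show (2 * n + 3 - 1) / 2 = n + 1 by omega,
    show 2 * n + 3 - 2 * k - 3 = 2 * n + 1 - (2 * k + 1) by omega]
  calc _ = (-1) ^ k * (((2 * n + 1).choose (2 * k + 1) : ℤ) *
          ((1 - X) ^ (2 * k + 1) * (1 + X) ^ (2 * n + 1 - (2 * k + 1)) : ℤ[X]).coeff n) := by
        rw [coeff_one_sub_X_pow_mul_one_add_X_pow _ _ _ (r := 2 * k + 2) (by omega),
          mul_sum, mul_sum]
        refine sum_congr rfl fun j _ ↦ ?_
        ring
    _ = (-1) ^ k * (((2 * n + 1).choose n : ℤ) * ((-1) ^ k * n.choose k)) := by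
        rw [choose_mul_coeff_one_sub_X_pow_mul_one_add_X_pow_comm,
          show 2 * n + 1 - n = n + 1 by omega, coeff_one_sub_X_pow_mul_one_add_X_pow_succ_odd]
    _ = _ := by
        have hsign : (-1 : ℤ) ^ k * (-1) ^ k = 1 := by
          rw [← mul_pow, neg_one_mul, neg_neg, one_pow]
        rw [Nat.choose_symm_half]
        linear_combination (n.choose k * (2 * n + 1).choose n : ℤ) * hsign

theorem equilateral_binomial_identity (m k : ℕ) (hm3 : 3 ≤ m) (hmodd : Odd m)
    (hk : 2 * k + 1 ≤ m - 2) :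
    ∑ j ∈ Finset.range (2 * k + 2),
        (-1 : ℤ) ^ (j + k) * ((2 * k + 1).choose j) *
          (if j ≤ (m - 3) / 2 then ((m - 2 * k - 3).choose ((m - 3) / 2 - j) : ℤ) else 0) *
          ((m - 2).choose (2 * k + 1)) =
      ((m - 3) / 2).choose k * ((m - 2).choose ((m - 1) / 2)) :=
  equilateral_binomial_identity_general m k hm3 hmodd
end

section
/- Let $m \ge 4$, $I = \{3,\ldots,m\}$, and let $\alpha \in \mathbb{R}_{>0}^m$ be generic with $\alpha_1 > \alpha_2$. If $J \subseteq I$ is not triangular and satisfies $-(\alpha_1+\alpha_2) < \ell_J < \alpha_2 - \alpha_1$, then the complement $J' = I \setminus J$ is triangular. Conversely, if $J' \subseteq I$ is triangular then its complement $J = I \setminus J'$ is not triangular and satisfies $-(\alpha_1+\alpha_2) < \ell_J < \alpha_2 - \alpha_1$. -/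
/-- A family of positive reals indexed by `S` is *generic* if no `±1`-signed sum vanishes. -/
def IsGeneric (β : ℕ → ℝ) (S : Finset ℕ) : Prop :=
  ∀ ε : ℕ → ℝ, (∀ i ∈ S, ε i = 1 ∨ ε i = -1) → ∑ i ∈ S, ε i * β i ≠ 0

/-- `ell α m J` is the signed sum `∑_{i∈J} α i - ∑_{i ∈ {3,…,m} \ J} α i`. -/
noncomputable def ell (α : ℕ → ℝ) (m : ℕ) (J : Finset ℕ) : ℝ :=
  ∑ i ∈ J, α i - ∑ i ∈ Finset.Icc 3 m \ J, α i

/-- A subset `J ⊆ {3,…,m}` is *triangular* for the weights `α` if `ell α m J > 0` and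
`α 1`, `α 2`, `ell α m J` satisfy the three triangle inequalities. -/
def Triangular (α : ℕ → ℝ) (m : ℕ) (J : Finset ℕ) : Prop :=
  J ⊆ Finset.Icc 3 m ∧ 0 < ell α m J ∧
    α 1 ≤ α 2 + ell α m J ∧ α 2 ≤ α 1 + ell α m J ∧ ell α m J ≤ α 1 + α 2

/-! Complementation in `{3,…,m}` negates `ell`, so it exchanges the window
`(α 1 - α 2, α 1 + α 2)` allowed for triangular sets with `(-(α 1 + α 2), α 2 - α 1)`.
Triangularity only gives the closed window; genericity excludes the endpoints
`ell J = α 1 ± α 2`, since each is the vanishing of a signed sum of all the `α i`. -/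

open Finset

lemma IsGeneric.sum_sub_sum_sdiff_ne_zero {β : ℕ → ℝ} {S A : Finset ℕ} (h : IsGeneric β S)
    (hA : A ⊆ S) : ∑ i ∈ A, β i - ∑ i ∈ S \ A, β i ≠ 0 := by
  have := h (fun i => if i ∈ A then 1 else -1) fun i _ => by split_ifs <;> simp
  simpa [ite_mul, sum_ite, filter_mem_eq_inter, filter_notMem_eq_sdiff,
    inter_eq_right.mpr hA, sub_eq_add_neg] using this

lemma Icc_one_eq_insert_insert_Icc_three {m : ℕ} (hm : 2 ≤ m) :
    Icc 1 m = insert 1 (insert 2 (Icc 3 m)) := by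
  ext i
  simp only [mem_Icc, mem_insert]
  omega

lemma ell_sdiff (α : ℕ → ℝ) (m : ℕ) {J : Finset ℕ} (hJ : J ⊆ Icc 3 m) :
    ell α m (Icc 3 m \ J) = -ell α m J := by
  rw [ell, ell, Finset.sdiff_sdiff_eq_self hJ]
  ring

section Triangular

variable {α : ℕ → ℝ} {m : ℕ} {J : Finset ℕ}

lemma one_notMem_of_subset_Icc_three (hJ : J ⊆ Icc 3 m) : 1 ∉ J :=
  fun h => by simpa using hJ h

lemma two_notMem_of_subset_Icc_three (hJ : J ⊆ Icc 3 m) : 2 ∉ J :=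
  fun h => by simpa using hJ h

lemma ell_ne_add (hm : 2 ≤ m) (hgen : IsGeneric α (Icc 1 m)) (hJ : J ⊆ Icc 3 m) :
    ell α m J ≠ α 1 + α 2 := by
  have h := hgen.sum_sub_sum_sdiff_ne_zero (hJ.trans (Icc_subset_Icc_left (by omega)))
  rw [Icc_one_eq_insert_insert_Icc_three hm,
    insert_sdiff_of_notMem _ (one_notMem_of_subset_Icc_three hJ),
    insert_sdiff_of_notMem _ (two_notMem_of_subset_Icc_three hJ), sum_insert (by simp),
    sum_insert (by simp)] at h
  rw [ell]
  contrapose! h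
  linarith

lemma ell_ne_sub (hm : 2 ≤ m) (hgen : IsGeneric α (Icc 1 m)) (hJ : J ⊆ Icc 3 m) :
    ell α m J ≠ α 1 - α 2 := by
  have h := hgen.sum_sub_sum_sdiff_ne_zero (A := insert 2 J)
    (insert_subset (mem_Icc.mpr ⟨one_le_two, hm⟩) (hJ.trans (Icc_subset_Icc_left (by omega))))
  rw [Icc_one_eq_insert_insert_Icc_three hm,
    insert_sdiff_of_notMem _ (by simp [one_notMem_of_subset_Icc_three hJ]), insert_sdiff_insert,
    sdiff_insert_of_notMem (show 2 ∉ Icc 3 m by simp),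
    sum_insert (two_notMem_of_subset_Icc_three hJ), sum_insert (by simp)] at h
  rw [ell]
  contrapose! h
  linarith

lemma Triangular.ell_mem_Ioo (hm : 2 ≤ m) (hgen : IsGeneric α (Icc 1 m))
    (hT : Triangular α m J) : ell α m J ∈ Set.Ioo (α 1 - α 2) (α 1 + α 2) := by
  obtain ⟨hJ, -, h1, -, h3⟩ := hT
  exact ⟨lt_of_le_of_ne (by linarith) (ell_ne_sub hm hgen hJ).symm,
    lt_of_le_of_ne h3 (ell_ne_add hm hgen hJ)⟩

lemma Triangular.not_triangular_sdiff (hT : Triangular α m J) :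
    ¬Triangular α m (Icc 3 m \ J) := by
  rintro ⟨-, hpos, -⟩
  rw [ell_sdiff α m hT.1] at hpos
  linarith [hT.2.1]

lemma triangular_sdiff_of_ell_mem_Ioo (h12 : α 2 < α 1) (hJ : J ⊆ Icc 3 m)
    (hell : ell α m J ∈ Set.Ioo (-(α 1 + α 2)) (α 2 - α 1)) :
    Triangular α m (Icc 3 m \ J) := by
  obtain ⟨hlo, hhi⟩ := hell
  rw [Triangular, ell_sdiff α m hJ]
  exact ⟨sdiff_subset, by linarith, by linarith, by linarith, by linarith⟩

end Triangular

theorem triangular_complement_general (m : ℕ) (hm : 4 ≤ m)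
    (α : ℕ → ℝ)
    (hgen : IsGeneric α (Finset.Icc 1 m)) (h12 : α 2 < α 1) :
    (∀ J : Finset ℕ, J ⊆ Finset.Icc 3 m → ¬ Triangular α m J →
        -(α 1 + α 2) < ell α m J → ell α m J < α 2 - α 1 →
        Triangular α m (Finset.Icc 3 m \ J)) ∧
      (∀ J' : Finset ℕ, Triangular α m J' →
        ¬ Triangular α m (Finset.Icc 3 m \ J') ∧
          -(α 1 + α 2) < ell α m (Finset.Icc 3 m \ J') ∧
          ell α m (Finset.Icc 3 m \ J') < α 2 - α 1) := by
  refine ⟨fun J hJ _ hlo hhi => triangular_sdiff_of_ell_mem_Ioo h12 hJ ⟨hlo, hhi⟩,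
    fun J' hT => ⟨hT.not_triangular_sdiff, ?_⟩⟩
  obtain ⟨hlo, hhi⟩ := hT.ell_mem_Ioo (by omega) hgen
  rw [ell_sdiff α m hT.1]
  constructor <;> linarith

theorem triangular_complement (m : ℕ) (hm : 4 ≤ m)
    (α : ℕ → ℝ) (hpos : ∀ i ∈ Finset.Icc 1 m, 0 < α i)
    (hgen : IsGeneric α (Finset.Icc 1 m)) (h12 : α 2 < α 1) :
    (∀ J : Finset ℕ, J ⊆ Finset.Icc 3 m → ¬ Triangular α m J →
        -(α 1 + α 2) < ell α m J → ell α m J < α 2 - α 1 →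
        Triangular α m (Finset.Icc 3 m \ J)) ∧
      (∀ J' : Finset ℕ, Triangular α m J' →
        ¬ Triangular α m (Finset.Icc 3 m \ J') ∧
          -(α 1 + α 2) < ell α m (Finset.Icc 3 m \ J') ∧
          ell α m (Finset.Icc 3 m \ J') < α 2 - α 1) :=
  triangular_complement_general m hm α hgen h12
end

section
/- Let $m \ge 4$, $I = \{3,\ldots,m\}$, let $\alpha \in \mathbb{R}_{>0}^{m+1}$ be generic with $\alpha_m > \alpha_{m+1}$. Write $\mathcal{T}_{m+1}$ for the triangular subsets of $\{3,\ldots,m+1\}$ relative to $(\alpha_1,\ldots,\alpha_{m+1})$, $\mathcal{T}_m^+$ for the triangular subsets of $\{3,\ldots,m\}$ relative to $(\alpha_1,\ldots,\alpha_{m-1},\alpha_m+\alpha_{m+1})$, and $\mathcal{T}_m^-$ relative to $(\alpha_1,\ldots,\alpha_{m-1},\alpha_m-\alpha_{m+1})$. Then $\mathcal{T}_{m+1}$ is the disjoint union of: (a) $\{J \in \mathcal{T}_m^+ : m \notin J\}$; (b) $\{J \cup \{m+1\} : J \in \mathcal{T}_m^+,\ m \in J\}$; (c) $\{J \in \mathcal{T}_m^-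 : m \in J\}$; (d) $\{J \cup \{m+1\} : J \in \mathcal{T}_m^-,\ m \notin J\}$. -/
/-!
Sort `J ⊆ {3,…,m+1}` by whether it contains `m` and `m + 1`. Taking `m + 1` out of `J` and
merging its weight into `α m` (added when `m` and `m + 1` lie on the same side of `J`,
subtracted otherwise) changes neither `ell` nor `α 1`, `α 2`. Hence each of the four
membership patterns of `m`, `m + 1` in `𝒯_{m+1}` is exactly one of the families (a)–(d), and
the pattern tells the families apart.
-/

open Finset Function

lemma setOf_eq_setOf_and_notMem {ι : Type*} {a : ι} {P Q : Finset ι → Prop}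
    (hP : ∀ J, P J → a ∉ J) (hPQ : ∀ J, a ∉ J → (P J ↔ Q J)) :
    {J | P J} = {J | Q J ∧ a ∉ J} :=
  Set.ext fun J => ⟨fun h => ⟨(hPQ J (hP J h)).1 h, hP J h⟩, fun h => (hPQ J h.2).2 h.1⟩

lemma image_insert_setOf_eq {ι : Type*} [DecidableEq ι] {a : ι} {P Q : Finset ι → Prop}
    (hP : ∀ J, P J → a ∉ J) (hPQ : ∀ J, a ∉ J → (P J ↔ Q (insert a J))) :
    insert a '' {J | P J} = {K | Q K ∧ a ∈ K} := by
  ext K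
  constructor
  · rintro ⟨J, hJ, rfl⟩
    exact ⟨(hPQ J (hP J hJ)).1 hJ, mem_insert_self a J⟩
  · rintro ⟨hQ, haK⟩
    refine ⟨K.erase a, (hPQ _ (notMem_erase a K)).2 ?_, insert_erase haK⟩
    rwa [insert_erase haK]

lemma triangular_congr {α β : ℕ → ℝ} {m n : ℕ} {J K : Finset ℕ} (h1 : α 1 = β 1)
    (h2 : α 2 = β 2) (hsub : J ⊆ Icc 3 m ↔ K ⊆ Icc 3 n) (hell : ell α m J = ell β n K) :
    Triangular α m J ↔ Triangular β n K := by
  unfold Triangular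
  rw [h1, h2, hell, hsub]

section Recursion

variable {α : ℕ → ℝ} {m : ℕ} {J : Finset ℕ} {c : ℝ}

lemma Triangular.succ_notMem (h : Triangular α m J) : m + 1 ∉ J := fun hJ => by
  have := mem_Icc.mp (h.1 hJ)
  omega

lemma subset_Icc_succ_iff (hm : 2 ≤ m) (hJ : m + 1 ∉ J) :
    J ⊆ Icc 3 (m + 1) ↔ J ⊆ Icc 3 m := by
  rw [← insert_Icc_right_eq_Icc_add_one (by omega), subset_insert_iff_of_notMem hJ]

lemma insert_subset_Icc_succ_iff (hm : 2 ≤ m) (hJ : m + 1 ∉ J) :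
    insert (m + 1) J ⊆ Icc 3 (m + 1) ↔ J ⊆ Icc 3 m := by
  rw [insert_subset_iff, subset_Icc_succ_iff hm hJ,
    and_iff_right (mem_Icc.mpr ⟨by omega, le_rfl⟩)]

lemma ell_succ (hm : 2 ≤ m) (hJ : m + 1 ∉ J) : ell α (m + 1) J = ell α m J - α (m + 1) := by
  unfold ell
  rw [← insert_Icc_right_eq_Icc_add_one (by omega), insert_sdiff_of_notMem _ hJ,
    sum_insert (by simp)]
  ring

lemma ell_succ_insert (hJ : m + 1 ∉ J) :
    ell α (m + 1) (insert (m + 1) J) = ell α m J + α (m + 1) := by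
  have hcompl : Icc 3 (m + 1) \ insert (m + 1) J = Icc 3 m \ J := by
    ext i
    by_cases hi : i ∈ J <;> simp only [mem_sdiff, mem_insert, mem_Icc, hi, or_true, or_false,
      not_true, not_false_eq_true, and_true, and_false]
    omega
  unfold ell
  rw [hcompl, sum_insert hJ]
  ring

lemma ell_update_of_mem (hmJ : m ∈ J) : ell (update α m c) m J = ell α m J + (c - α m) := by
  have hcompl : m ∉ Icc 3 m \ J := fun h => (mem_sdiff.mp h).2 hmJ
  unfold ell
  rw [sum_update_of_mem hmJ, sum_update_of_notMem hcompl,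
    sum_eq_add_sum_sdiff_singleton_of_mem hmJ]
  ring

lemma ell_update_of_notMem (hm : 3 ≤ m) (hmJ : m ∉ J) :
    ell (update α m c) m J = ell α m J - (c - α m) := by
  have hcompl : m ∈ Icc 3 m \ J := mem_sdiff.mpr ⟨mem_Icc.mpr ⟨hm, le_rfl⟩, hmJ⟩
  unfold ell
  rw [sum_update_of_notMem hmJ, sum_update_of_mem hcompl,
    sum_eq_add_sum_sdiff_singleton_of_mem hcompl]
  ring

lemma triangular_succ_iff_update (hm : 3 ≤ m) (hJ : m + 1 ∉ J)
    (hell : ell α (m + 1) J = ell (update α m c) m J) :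
    Triangular α (m + 1) J ↔ Triangular (update α m c) m J :=
  triangular_congr (update_of_ne (by omega) _ _).symm (update_of_ne (by omega) _ _).symm
    (subset_Icc_succ_iff (by omega) hJ) hell

lemma triangular_succ_insert_iff_update (hm : 3 ≤ m) (hJ : m + 1 ∉ J)
    (hell : ell α (m + 1) (insert (m + 1) J) = ell (update α m c) m J) :
    Triangular α (m + 1) (insert (m + 1) J) ↔ Triangular (update α m c) m J :=
  triangular_congr (update_of_ne (by omega) _ _).symm (update_of_ne (by omega) _ _).symm
    (insert_subset_Icc_succ_iff (by omega) hJ) hell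

lemma setOf_triangular_update_add_notMem (hm : 3 ≤ m) :
    {J | Triangular (update α m (α m + α (m + 1))) m J ∧ m ∉ J} =
      {J | (Triangular α (m + 1) J ∧ m ∉ J) ∧ m + 1 ∉ J} :=
  setOf_eq_setOf_and_notMem (fun _ hT => hT.1.succ_notMem) fun _ hJ => and_congr_left fun hmJ =>
    (triangular_succ_iff_update hm hJ <| by
      rw [ell_succ (by omega) hJ, ell_update_of_notMem hm hmJ]; ring).symm

lemma image_insert_setOf_triangular_update_add_mem (hm : 3 ≤ m) :
    insert (m + 1) '' {J | Triangular (update α m (α m + α (m + 1))) m J ∧ m ∈ J} =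
      {J | (Triangular α (m + 1) J ∧ m ∈ J) ∧ m + 1 ∈ J} :=
  image_insert_setOf_eq (fun _ hT => hT.1.succ_notMem) fun _ hJ => by
    rw [mem_insert, or_iff_right (by omega)]
    exact and_congr_left fun hmJ => (triangular_succ_insert_iff_update hm hJ <| by
      rw [ell_succ_insert hJ, ell_update_of_mem hmJ]; ring).symm

lemma setOf_triangular_update_sub_mem (hm : 3 ≤ m) :
    {J | Triangular (update α m (α m - α (m + 1))) m J ∧ m ∈ J} =
      {J | (Triangular α (m + 1) J ∧ m ∈ J) ∧ m + 1 ∉ J} :=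
  setOf_eq_setOf_and_notMem (fun _ hT => hT.1.succ_notMem) fun _ hJ => and_congr_left fun hmJ =>
    (triangular_succ_iff_update hm hJ <| by
      rw [ell_succ (by omega) hJ, ell_update_of_mem hmJ]; ring).symm

lemma image_insert_setOf_triangular_update_sub_notMem (hm : 3 ≤ m) :
    insert (m + 1) '' {J | Triangular (update α m (α m - α (m + 1))) m J ∧ m ∉ J} =
      {J | (Triangular α (m + 1) J ∧ m ∉ J) ∧ m + 1 ∈ J} :=
  image_insert_setOf_eq (fun _ hT => hT.1.succ_notMem) fun _ hJ => by
    rw [mem_insert, or_iff_right (by omega)]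
    exact and_congr_left fun hmJ => (triangular_succ_insert_iff_update hm hJ <| by
      rw [ell_succ_insert hJ, ell_update_of_notMem hm hmJ]; ring).symm

end Recursion

theorem triangular_recursion_general (m : ℕ) (hm : 4 ≤ m)
    (α : ℕ → ℝ) :
    {J : Finset ℕ | Triangular α (m + 1) J} =
        ({J : Finset ℕ | Triangular (Function.update α m (α m + α (m + 1))) m J ∧ m ∉ J} ∪
          (fun J => insert (m + 1) J) ''
            {J : Finset ℕ | Triangular (Function.update α m (α m + α (m + 1))) m J ∧ m ∈ J} ∪
          {J : Finset ℕ | Triangular (Function.update α m (α m - α (m + 1))) m J ∧ m ∈ J} ∪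
          (fun J => insert (m + 1) J) ''
            {J : Finset ℕ | Triangular (Function.update α m (α m - α (m + 1))) m J ∧ m ∉ J}) ∧
      List.Pairwise Disjoint
        [({J : Finset ℕ | Triangular (Function.update α m (α m + α (m + 1))) m J ∧ m ∉ J}),
         ((fun J => insert (m + 1) J) ''
            {J : Finset ℕ | Triangular (Function.update α m (α m + α (m + 1))) m J ∧ m ∈ J}),
         ({J : Finset ℕ | Triangular (Function.update α m (α m - α (m + 1))) m J ∧ m ∈ J}),
         ((fun J => insert (m + 1) J) ''
            {J : Finset ℕ | Triangular (Function.update α m (α m - α (m + 1))) m J ∧ m ∉ J})] := by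
  have hm3 : 3 ≤ m := by omega
  rw [setOf_triangular_update_add_notMem hm3, image_insert_setOf_triangular_update_add_mem hm3,
    setOf_triangular_update_sub_mem hm3, image_insert_setOf_triangular_update_sub_notMem hm3]
  refine ⟨?_, ?_⟩
  · ext J
    simp only [Set.mem_union, Set.mem_ofPred_eq]
    tauto
  · simp only [List.pairwise_cons, List.mem_cons, List.not_mem_nil, Set.disjoint_left,
      Set.mem_ofPred_eq, forall_eq_or_imp]
    tauto

theorem triangular_recursion (m : ℕ) (hm : 4 ≤ m)
    (α : ℕ → ℝ) (hpos : ∀ i ∈ Finset.Icc 1 (m + 1), 0 < α i)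
    (hgen : IsGeneric α (Finset.Icc 1 (m + 1))) (hlast : α (m + 1) < α m) :
    {J : Finset ℕ | Triangular α (m + 1) J} =
        ({J : Finset ℕ | Triangular (Function.update α m (α m + α (m + 1))) m J ∧ m ∉ J} ∪
          (fun J => insert (m + 1) J) ''
            {J : Finset ℕ | Triangular (Function.update α m (α m + α (m + 1))) m J ∧ m ∈ J} ∪
          {J : Finset ℕ | Triangular (Function.update α m (α m - α (m + 1))) m J ∧ m ∈ J} ∪
          (fun J => insert (m + 1) J) ''
            {J : Finset ℕ | Triangular (Function.update α m (α m - α (m + 1))) m J ∧ m ∉ J}) ∧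
      List.Pairwise Disjoint
        [({J : Finset ℕ | Triangular (Function.update α m (α m + α (m + 1))) m J ∧ m ∉ J}),
         ((fun J => insert (m + 1) J) ''
            {J : Finset ℕ | Triangular (Function.update α m (α m + α (m + 1))) m J ∧ m ∈ J}),
         ({J : Finset ℕ | Triangular (Function.update α m (α m - α (m + 1))) m J ∧ m ∈ J}),
         ((fun J => insert (m + 1) J) ''
            {J : Finset ℕ | Triangular (Function.update α m (α m - α (m + 1))) m J ∧ m ∉ J})] :=
  triangular_recursion_general m hm α
end
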